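/- arXiv:1811.09224 — 9 statements merged into one kernel-verified Lean document; each statement's English description precedes it below -/
import Mathlib

section
/- Let G be a group, let n ≥ 2 be an integer, and let s, m ∈ G satisfy s^{n²−n+1} = 1 and m·s·m⁻¹ = s^{n−1}. Then for every integer a one has (s^a·m)³ = m³ and (s^a·m²)³ = m⁶. In particular, if moreover m³ = 1, then every element of the form s^a·m or s^a·m² has order dividing 3. -/
/-!
Conjugation by `m` acts on `⟨s⟩` as `s ↦ s ^ k` with `k = n - 1`, so moving the three copies of
`m` in `(s ^ a * m) ^ 3` to the right turns it into `s ^ (a * (1 + k + k ^ 2)) * m ^ 3`; likewise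
`(s ^ a * m ^ 2) ^ 3 = s ^ (a * (1 + k ^ 2 + k ^ 4)) * m ^ 6`. Both exponents are multiples of
`1 + k + k ^ 2 = n ^ 2 - n + 1`, because `1 + k ^ 2 + k ^ 4 = (1 + k + k ^ 2) * (1 - k + k ^ 2)`.
-/

theorem Nat.sq_sub_self_add_one (n : ℕ) : n ^ 2 - n + 1 = 1 + (n - 1) + (n - 1) ^ 2 := by
  cases n with
  | zero => rfl
  | succ j =>
    rw [Nat.add_sub_cancel, show (j + 1) ^ 2 = j + 1 + (j + j ^ 2) by ring]
    omega

section ConjZPow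

variable {G : Type*} [Group G] {s m : G} {k : ℤ}

theorem conj_pow_eq_zpow_pow (h : m * s * m⁻¹ = s ^ k) (j : ℕ) :
    m ^ j * s * (m ^ j)⁻¹ = s ^ (k ^ j) := by
  induction j with
  | zero => simp
  | succ j ih =>
    calc m ^ (j + 1) * s * (m ^ (j + 1))⁻¹ = m ^ j * (m * s * m⁻¹) * (m ^ j)⁻¹ := by group
      _ = (m ^ j * s * (m ^ j)⁻¹) ^ k := by rw [h, conj_zpow]
      _ = s ^ (k ^ (j + 1)) := by rw [ih, ← zpow_mul, pow_succ]

theorem zpow_mul_cube_eq (h : m * s * m⁻¹ = s ^ k) (a : ℤ) :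
    (s ^ a * m) ^ 3 = s ^ (a * (1 + k + k ^ 2)) * m ^ 3 := by
  have h₁ : m * s ^ a * m⁻¹ = s ^ (a * k) := by
    rw [← conj_zpow, h, ← zpow_mul, mul_comm]
  have h₂ : m ^ 2 * s ^ a * (m ^ 2)⁻¹ = s ^ (a * k ^ 2) := by
    rw [← conj_zpow, conj_pow_eq_zpow_pow h, ← zpow_mul, mul_comm]
  calc (s ^ a * m) ^ 3 = s ^ a * (m * s ^ a * m⁻¹) * (m ^ 2 * s ^ a * (m ^ 2)⁻¹) * m ^ 3 := by
        simp only [pow_succ, pow_zero, one_mul]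
        group
    _ = s ^ (a * (1 + k + k ^ 2)) * m ^ 3 := by
        rw [h₁, h₂, ← zpow_add, ← zpow_add]
        ring_nf

end ConjZPow

theorem zpow_eq_one_of_dvd {G : Type*} [Group G] {s : G} {N M : ℤ} (hN : s ^ N = 1)
    (hdvd : N ∣ M) : s ^ M = 1 :=
  orderOf_dvd_iff_zpow_eq_one.1 ((orderOf_dvd_iff_zpow_eq_one.2 hN).trans hdvd)

theorem semidirect_cube_identity_general (G : Type*) [Group G] (n : ℕ)
    (s m : G) (hs : s ^ (n ^ 2 - n + 1) = 1) (hm : m * s * m⁻¹ = s ^ (n - 1)) :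
    (∀ a : ℤ, (s ^ a * m) ^ 3 = m ^ 3 ∧ (s ^ a * m ^ 2) ^ 3 = m ^ 6) ∧
    (m ^ 3 = 1 → ∀ a : ℤ, orderOf (s ^ a * m) ∣ 3 ∧ orderOf (s ^ a * m ^ 2) ∣ 3) := by
  set k : ℤ := ((n - 1 : ℕ) : ℤ)
  have hconj : m * s * m⁻¹ = s ^ k := by rw [hm, zpow_natCast]
  have hord : s ^ (1 + k + k ^ 2) = 1 := by
    rw [show 1 + k + k ^ 2 = ((n ^ 2 - n + 1 : ℕ) : ℤ) by push_cast [Nat.sq_sub_self_add_one]; rfl,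
      zpow_natCast, hs]
  have hcubes : ∀ a : ℤ, (s ^ a * m) ^ 3 = m ^ 3 ∧ (s ^ a * m ^ 2) ^ 3 = m ^ 6 := fun a =>
    ⟨by rw [zpow_mul_cube_eq hconj, zpow_eq_one_of_dvd hord (dvd_mul_left _ a), one_mul],
     by rw [zpow_mul_cube_eq (conj_pow_eq_zpow_pow hconj 2),
        zpow_eq_one_of_dvd hord ⟨a * (1 - k + k ^ 2), by ring⟩, one_mul, ← pow_mul]⟩
  refine ⟨hcubes, fun h3 a => ⟨orderOf_dvd_of_pow_eq_one ?_, orderOf_dvd_of_pow_eq_one ?_⟩⟩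
  · rw [(hcubes a).1, h3]
  · rw [(hcubes a).2, show 6 = 3 * 2 by rfl, pow_mul, h3, one_pow]

/-- In a group `G`, if `s^(n²-n+1) = 1` and `m·s·m⁻¹ = s^(n-1)`, then
`(s^a·m)³ = m³` and `(s^a·m²)³ = m⁶` for every integer `a`; in particular, if
moreover `m³ = 1`, every element `s^a·m` or `s^a·m²` has order dividing 3. -/
theorem semidirect_cube_identity (G : Type*) [Group G] (n : ℕ) (hn : 2 ≤ n)
    (s m : G) (hs : s ^ (n ^ 2 - n + 1) = 1) (hm : m * s * m⁻¹ = s ^ (n - 1)) :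
    (∀ a : ℤ, (s ^ a * m) ^ 3 = m ^ 3 ∧ (s ^ a * m ^ 2) ^ 3 = m ^ 6) ∧
    (m ^ 3 = 1 → ∀ a : ℤ, orderOf (s ^ a * m) ∣ 3 ∧ orderOf (s ^ a * m ^ 2) ∣ 3) :=
  semidirect_cube_identity_general G n s m hs hm
end

section
/- Let K be a field and n an integer, and regard g(T) = (n−1)·T³ + (n³−3n²+6n−2)·T² + (n³−3n²+3n+1)·T − (n−1) as a polynomial over K via the canonical map ℤ → K. Then for every t ∈ K with t ≠ 0 and t ≠ −1 one has g(t) = t³·g(−(t+1)/t) and g(t) = −(t+1)³·g(−1/(t+1)). Moreover g(0) = −(n−1) and g(−1) = n−1 in K; consequently, if the characteristic of K does not divide n − 1 and η ∈ K satisfies g(η) = 0, then η ≠ 0, η ≠ −1, and both −1/(η+1) and −(η+1)/η are also roots of g. -/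
/-!
The Möbius map `t ↦ -1/(t+1)` has order three, its square being `t ↦ -(t+1)/t`, and `g` is
invariant under it up to the cocycle factors `-(t+1)³` and `t³`. Clearing denominators turns both
identities into polynomial identities in `t`. A root of `g` cannot be `0` or `-1` when `n - 1 ≠ 0`
in `K`, since there `g` takes the values `∓(n-1)`; so the cocycle factors do not vanish at a root,
and the orbit of a root consists of roots.
-/

section HurwitzCubic

variable {K : Type*}

def hurwitzCubic [CommRing K] (n : ℤ) (t : K) : K :=
  ((n : K) - 1) * t ^ 3
    + ((n ^ 3 - 3 * n ^ 2 + 6 * n - 2 : ℤ) : K) * t ^ 2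
    + ((n ^ 3 - 3 * n ^ 2 + 3 * n + 1 : ℤ) : K) * t - ((n : K) - 1)

section CommRing

variable [CommRing K] (n : ℤ)

@[simp]
lemma hurwitzCubic_zero : hurwitzCubic n (0 : K) = -((n : K) - 1) := by
  simp [hurwitzCubic]

@[simp]
lemma hurwitzCubic_neg_one : hurwitzCubic n (-1 : K) = (n : K) - 1 := by
  simp only [hurwitzCubic]; push_cast; ring

end CommRing

section Field

variable [Field K] {n : ℤ} {t : K}

lemma hurwitzCubic_eq_pow_mul_neg_add_one_div (ht : t ≠ 0) :
    hurwitzCubic n t = t ^ 3 * hurwitzCubic n (-(t + 1) / t) := by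
  simp only [hurwitzCubic]
  push_cast
  field_simp
  ring

lemma hurwitzCubic_eq_neg_pow_mul_neg_one_div (ht : t + 1 ≠ 0) :
    hurwitzCubic n t = -(t + 1) ^ 3 * hurwitzCubic n (-1 / (t + 1)) := by
  simp only [hurwitzCubic]
  push_cast
  field_simp
  ring

lemma ne_zero_of_hurwitzCubic_eq_zero (hn : (n : K) - 1 ≠ 0) (h : hurwitzCubic n t = 0) :
    t ≠ 0 := by
  rintro rfl
  rw [hurwitzCubic_zero, neg_eq_zero] at h
  exact hn h

lemma ne_neg_one_of_hurwitzCubic_eq_zero (hn : (n : K) - 1 ≠ 0) (h : hurwitzCubic n t = 0) :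
    t ≠ -1 := by
  rintro rfl
  rw [hurwitzCubic_neg_one] at h
  exact hn h

lemma hurwitzCubic_neg_add_one_div_eq_zero (ht : t ≠ 0) (h : hurwitzCubic n t = 0) :
    hurwitzCubic n (-(t + 1) / t) = 0 := by
  rw [hurwitzCubic_eq_pow_mul_neg_add_one_div ht] at h
  exact (mul_eq_zero.mp h).resolve_left (pow_ne_zero 3 ht)

lemma hurwitzCubic_neg_one_div_eq_zero (ht : t + 1 ≠ 0) (h : hurwitzCubic n t = 0) :
    hurwitzCubic n (-1 / (t + 1)) = 0 := by
  rw [hurwitzCubic_eq_neg_pow_mul_neg_one_div ht] at h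
  exact (mul_eq_zero.mp h).resolve_left (neg_ne_zero.mpr (pow_ne_zero 3 ht))

end Field

end HurwitzCubic

/-- Over a field `K`, the cubic
`g(T) = (n-1)T³ + (n³-3n²+6n-2)T² + (n³-3n²+3n+1)T - (n-1)` satisfies
`g(t) = t³·g(-(t+1)/t)` and `g(t) = -(t+1)³·g(-1/(t+1))` for `t ≠ 0, -1`; moreover
`g(0) = -(n-1)` and `g(-1) = n-1`; consequently if `char K ∤ n-1` and `g(η) = 0`,
then `η ≠ 0`, `η ≠ -1` and `-1/(η+1)`, `-(η+1)/η` are also roots of `g`. -/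
theorem hurwitz_cubic_root_symmetry (K : Type*) [Field K] (n : ℤ)
    (g : K → K)
    (hg : ∀ t : K, g t = ((n : K) - 1) * t ^ 3
        + ((n ^ 3 - 3 * n ^ 2 + 6 * n - 2 : ℤ) : K) * t ^ 2
        + ((n ^ 3 - 3 * n ^ 2 + 3 * n + 1 : ℤ) : K) * t - ((n : K) - 1)) :
    (∀ t : K, t ≠ 0 → t ≠ -1 →
      g t = t ^ 3 * g (-(t + 1) / t) ∧ g t = -(t + 1) ^ 3 * g (-1 / (t + 1))) ∧
    g 0 = -((n : K) - 1) ∧ g (-1) = (n : K) - 1 ∧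
    (¬ ((ringChar K : ℤ) ∣ (n - 1)) → ∀ η : K, g η = 0 →
      η ≠ 0 ∧ η ≠ -1 ∧ g (-1 / (η + 1)) = 0 ∧ g (-(η + 1) / η) = 0) := by
  obtain rfl : g = hurwitzCubic n := funext hg
  refine ⟨fun t ht ht₁ => ⟨hurwitzCubic_eq_pow_mul_neg_add_one_div ht,
      hurwitzCubic_eq_neg_pow_mul_neg_one_div (add_eq_zero_iff_eq_neg.not.mpr ht₁)⟩,
    hurwitzCubic_zero n, hurwitzCubic_neg_one n, fun hchar η hη => ?_⟩
  have hn : (n : K) - 1 ≠ 0 := by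
    rwa [← Int.cast_one, ← Int.cast_sub, Ne, CharP.intCast_eq_zero_iff K (ringChar K)]
  have hη₀ := ne_zero_of_hurwitzCubic_eq_zero hn hη
  have hη₁ := ne_neg_one_of_hurwitzCubic_eq_zero hn hη
  exact ⟨hη₀, hη₁, hurwitzCubic_neg_one_div_eq_zero (add_eq_zero_iff_eq_neg.not.mpr hη₁) hη,
    hurwitzCubic_neg_add_one_div_eq_zero hη₀ hη⟩
end

section
/- Let p be an odd prime and let n be an integer such that p does not divide (n² − n)·(n² − n + 1) and p divides n² − 4n + 7. Then p ≥ 7; moreover, in the prime field 𝔽_p the element α := (1 − n)/2 satisfies α² + α + 1 = 0 (i.e., α is a primitive cubic root of unity), and in 𝔽_p[T] one has the factorization g(T) = (n−1)·(T − α)³. -/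
/-!
The conditions `p ∤ (n² - n)(n² - n + 1)` and `p ∣ n² - 4n + 7` have no common solution modulo
`2`, `3` or `5`, whence `p ≥ 7`. For `N = n mod p` and `α = (1 - N)/2` one has
`4(α² + α + 1) = N² - 4N + 7 = 0`, so `α` is a primitive cube root of unity; substituting
`N = 1 - 2α` shows that the difference of the two sides of the factorization is a multiple
of `α² + α + 1`.
-/

open Polynomial

theorem seven_le_of_sq_sub_four_mul_add_seven_eq_zero {p : ℕ} (hp : p.Prime) {x : ZMod p}
    (h1 : (x ^ 2 - x) * (x ^ 2 - x + 1) ≠ 0) (h2 : x ^ 2 - 4 * x + 7 = 0) : 7 ≤ p := by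
  by_contra! hlt
  have hp2 := hp.two_le
  interval_cases p <;> first | (revert x; decide) | norm_num at hp

theorem half_one_sub_sq_add_add_one_eq_zero {K : Type*} [Field K] (h2 : (2 : K) ≠ 0) {N : K}
    (hN : N ^ 2 - 4 * N + 7 = 0) : ((1 - N) / 2) ^ 2 + (1 - N) / 2 + 1 = 0 := by
  field_simp
  linear_combination hN

theorem cubic_eq_C_mul_X_sub_C_pow_three {R : Type*} [CommRing R] {α N : R}
    (hα : α ^ 2 + α + 1 = 0) (hN : N = 1 - 2 * α) :
    C (N - 1) * X ^ 3 + C (N ^ 3 - 3 * N ^ 2 + 6 * N - 2) * X ^ 2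
        + C (N ^ 3 - 3 * N ^ 2 + 3 * N + 1) * X - C (N - 1)
      = C (N - 1) * (X - C α) ^ 3 := by
  subst hN
  have hC : C α ^ 2 + C α + 1 = 0 := by
    rw [← map_pow, ← map_one C, ← map_add, ← map_add, hα, map_zero]
  simp only [map_sub, map_add, map_mul, map_pow, map_one, map_ofNat]
  linear_combination
    ((2 - 8 * C α) * X ^ 2 - 2 * (C α - 1) * X - 2 * C α * (C α - 1)) * hC

theorem hurwitz_cubic_triple_root_general (p : ℕ) [Fact (Nat.Prime p)]
    (n : ℤ) (h1 : ¬ (p : ℤ) ∣ (n ^ 2 - n) * (n ^ 2 - n + 1))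
    (h2 : (p : ℤ) ∣ n ^ 2 - 4 * n + 7) :
    7 ≤ p ∧
    ((1 - (n : ZMod p)) / 2) ^ 2 + (1 - (n : ZMod p)) / 2 + 1 = 0 ∧
    (C ((n : ZMod p) - 1) * X ^ 3
        + C ((n ^ 3 - 3 * n ^ 2 + 6 * n - 2 : ℤ) : ZMod p) * X ^ 2
        + C ((n ^ 3 - 3 * n ^ 2 + 3 * n + 1 : ℤ) : ZMod p) * X
        - C ((n : ZMod p) - 1)
      = C ((n : ZMod p) - 1) * (X - C ((1 - (n : ZMod p)) / 2)) ^ 3) := by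
  have hroot : (n : ZMod p) ^ 2 - 4 * n + 7 = 0 := by
    exact_mod_cast (ZMod.intCast_zmod_eq_zero_iff_dvd _ p).mpr h2
  have hunit : ((n : ZMod p) ^ 2 - n) * ((n : ZMod p) ^ 2 - n + 1) ≠ 0 := by
    exact_mod_cast mt (ZMod.intCast_zmod_eq_zero_iff_dvd _ p).mp h1
  have h7 : 7 ≤ p := seven_le_of_sq_sub_four_mul_add_seven_eq_zero Fact.out hunit hroot
  have htwo : (2 : ZMod p) ≠ 0 := by
    rw [← Nat.cast_ofNat, Ne, ZMod.natCast_eq_zero_iff]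
    exact fun hdvd => by have := Nat.le_of_dvd two_pos hdvd; omega
  have hα := half_one_sub_sq_add_add_one_eq_zero htwo hroot
  refine ⟨h7, hα, ?_⟩
  push_cast
  exact cubic_eq_C_mul_X_sub_C_pow_three hα (by field_simp; ring)

/-- For an odd prime `p` with `p ∤ (n²-n)(n²-n+1)` and `p ∣ n²-4n+7`,
one has `p ≥ 7`; in `𝔽_p` the element `α = (1-n)/2` satisfies `α² + α + 1 = 0`,
and in `𝔽_p[T]` the cubic `g` factors as `(n-1)·(T-α)³`. -/
theorem hurwitz_cubic_triple_root (p : ℕ) [Fact (Nat.Prime p)] (hodd : Odd p)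
    (n : ℤ) (h1 : ¬ (p : ℤ) ∣ (n ^ 2 - n) * (n ^ 2 - n + 1))
    (h2 : (p : ℤ) ∣ n ^ 2 - 4 * n + 7) :
    7 ≤ p ∧
    ((1 - (n : ZMod p)) / 2) ^ 2 + (1 - (n : ZMod p)) / 2 + 1 = 0 ∧
    (C ((n : ZMod p) - 1) * X ^ 3
        + C ((n ^ 3 - 3 * n ^ 2 + 6 * n - 2 : ℤ) : ZMod p) * X ^ 2
        + C ((n ^ 3 - 3 * n ^ 2 + 3 * n + 1 : ℤ) : ZMod p) * X
        - C ((n : ZMod p) - 1)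
      = C ((n : ZMod p) - 1) * (X - C ((1 - (n : ZMod p)) / 2)) ^ 3) :=
  hurwitz_cubic_triple_root_general p n h1 h2
end

section
/- Let K be an algebraically closed field of characteristic p > 2 and let n be an integer such that p does not divide (n² − n)·(n² − n + 1) and p does not divide n² − 4n + 7. Let η ∈ K be any root of g(T), regarded over K. Then η ≠ 0 and η ≠ −1, in K[T] one has the factorization g(T) = (n−1)·(T − η)·(T + 1/(η+1))·(T + (η+1)/η), and the three roots η, −1/(η+1), −(η+1)/η are pairwise distinct. -/
/-!
Since the coefficients satisfy `c = b - 3a` (with `a = n - 1`), `g` is the homogenised form of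
Shanks' simplest cubic `a T³ + b T² + (b - 3a) T - a`, whose root set is stable under the Möbius
map `T ↦ -1/(T + 1)` of order three; this yields the factorisation. Two of the roots coincide only
at a fixed point of that map, i.e. a root of `T² + T + 1`, and such a root of the cubic forces
`b² - 3ab + 9a² = (n² - 4n + 7)(n² - n + 1)² = 0`.
-/

open Polynomial

section ShanksCubic

variable {K : Type*} [Field K] {a b η : K}

theorem ne_zero_of_shanks_root (ha : a ≠ 0)
    (hη : a * η ^ 3 + b * η ^ 2 + (b - 3 * a) * η - a = 0) : η ≠ 0 := by
  rintro rfl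
  exact ha (by linear_combination -hη)

theorem ne_neg_one_of_shanks_root (ha : a ≠ 0)
    (hη : a * η ^ 3 + b * η ^ 2 + (b - 3 * a) * η - a = 0) : η ≠ -1 := by
  rintro rfl
  exact ha (by linear_combination hη)

theorem shanks_factorization (h0 : η ≠ 0) (hm1 : η ≠ -1)
    (hη : a * η ^ 3 + b * η ^ 2 + (b - 3 * a) * η - a = 0) :
    C a * X ^ 3 + C b * X ^ 2 + C (b - 3 * a) * X - C a
      = C a * (X - C η) * (X + C (1 / (η + 1))) * (X + C ((η + 1) / η)) := by
  have h1 : η + 1 ≠ 0 := fun h => hm1 (eq_neg_of_add_eq_zero_left h)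
  set u := 1 / (η + 1)
  set v := (η + 1) / η
  have hsum : b = a * (u + v - η) := by
    simp only [u, v]
    field_simp
    linear_combination hη
  have hpair : b - 3 * a = a * (u * v - η * u - η * v) := by
    simp only [u, v]
    field_simp
    linear_combination hη
  have hprod : C η * C u * C v = (1 : K[X]) := by
    rw [← map_mul, ← map_mul, show η * u * v = 1 by simp only [u, v]; field_simp, map_one]
  rw [hpair, hsum]
  simp only [map_mul, map_add, map_sub]
  linear_combination C a * hprod

theorem sq_add_self_add_one_ne_zero_of_shanks_root (hdisc : b ^ 2 - 3 * a * b + 9 * a ^ 2 ≠ 0)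
    (hη : a * η ^ 3 + b * η ^ 2 + (b - 3 * a) * η - a = 0) : η ^ 2 + η + 1 ≠ 0 := by
  intro hQ
  apply hdisc
  -- `η` is a primitive cube root of unity, at which the cubic reduces to `-(b + 3aη)`.
  have hlin : b + 3 * a * η = 0 := by
    linear_combination -hη + (a * η - a + b) * hQ
  linear_combination 9 * a ^ 2 * hQ + (b - 3 * a * η - 3 * a) * hlin

theorem shanks_roots_pairwise_distinct (h0 : η ≠ 0) (hm1 : η ≠ -1) (hQ : η ^ 2 + η + 1 ≠ 0) :
    η ≠ -(1 / (η + 1)) ∧ η ≠ -((η + 1) / η) ∧ -(1 / (η + 1)) ≠ -((η + 1) / η) := by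
  have h1 : η + 1 ≠ 0 := fun h => hm1 (eq_neg_of_add_eq_zero_left h)
  refine ⟨fun h => hQ ?_, fun h => hQ ?_, fun h => hQ ?_⟩ <;>
  · field_simp at h
    linear_combination h

end ShanksCubic

theorem intCast_ne_zero_of_dvd_of_not_dvd {R : Type*} [AddGroupWithOne R] (p : ℕ) [CharP R p]
    {k m : ℤ} (hkm : k ∣ m) (hm : ¬ (p : ℤ) ∣ m) : (k : R) ≠ 0 :=
  fun hk => hm (((CharP.intCast_eq_zero_iff R p k).mp hk).trans hkm)

theorem hurwitz_cubic_three_distinct_roots_general (K : Type*) [Field K]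
    (p : ℕ) [CharP K p] (n : ℤ)
    (h1 : ¬ (p : ℤ) ∣ (n ^ 2 - n) * (n ^ 2 - n + 1))
    (h2 : ¬ (p : ℤ) ∣ n ^ 2 - 4 * n + 7)
    (η : K)
    (hη : ((n : K) - 1) * η ^ 3 + ((n ^ 3 - 3 * n ^ 2 + 6 * n - 2 : ℤ) : K) * η ^ 2
        + ((n ^ 3 - 3 * n ^ 2 + 3 * n + 1 : ℤ) : K) * η - ((n : K) - 1) = 0) :
    η ≠ 0 ∧ η ≠ -1 ∧
    (C ((n : K) - 1) * X ^ 3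
        + C ((n ^ 3 - 3 * n ^ 2 + 6 * n - 2 : ℤ) : K) * X ^ 2
        + C ((n ^ 3 - 3 * n ^ 2 + 3 * n + 1 : ℤ) : K) * X
        - C ((n : K) - 1)
      = C ((n : K) - 1) * (X - C η) * (X + C (1 / (η + 1))) * (X + C ((η + 1) / η))) ∧
    η ≠ -(1 / (η + 1)) ∧ η ≠ -((η + 1) / η) ∧ -(1 / (η + 1)) ≠ -((η + 1) / η) := by
  set a : K := (n : K) - 1
  set b : K := ((n ^ 3 - 3 * n ^ 2 + 6 * n - 2 : ℤ) : K)
  have hc : ((n ^ 3 - 3 * n ^ 2 + 3 * n + 1 : ℤ) : K) = b - 3 * a := by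
    simp only [a, b]; push_cast; ring
  rw [hc] at hη ⊢
  have ha : a ≠ 0 := by
    have : ((n - 1 : ℤ) : K) ≠ 0 :=
      intCast_ne_zero_of_dvd_of_not_dvd p ⟨n * (n ^ 2 - n + 1), by ring⟩ h1
    simpa [a] using this
  have hdisc : b ^ 2 - 3 * a * b + 9 * a ^ 2 ≠ 0 := by
    have hfactor : b ^ 2 - 3 * a * b + 9 * a ^ 2
        = ((n ^ 2 - 4 * n + 7 : ℤ) : K) * ((n ^ 2 - n + 1 : ℤ) : K) ^ 2 := by
      simp only [a, b]; push_cast; ring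
    rw [hfactor]
    exact mul_ne_zero (intCast_ne_zero_of_dvd_of_not_dvd p dvd_rfl h2)
      (pow_ne_zero _ (intCast_ne_zero_of_dvd_of_not_dvd p (dvd_mul_left _ _) h1))
  have h0 := ne_zero_of_shanks_root ha hη
  have hm1 := ne_neg_one_of_shanks_root ha hη
  exact ⟨h0, hm1, shanks_factorization h0 hm1 hη, shanks_roots_pairwise_distinct h0 hm1
    (sq_add_self_add_one_ne_zero_of_shanks_root hdisc hη)⟩

/-- Over an algebraically closed field `K` of characteristic `p > 2`
with `p ∤ (n²-n)(n²-n+1)` and `p ∤ n²-4n+7`, any root `η` of the cubic `g` satisfies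
`η ≠ 0`, `η ≠ -1`, and `g(T) = (n-1)(T-η)(T+1/(η+1))(T+(η+1)/η)` in `K[T]`, the
three roots `η`, `-1/(η+1)`, `-(η+1)/η` being pairwise distinct. -/
theorem hurwitz_cubic_three_distinct_roots (K : Type*) [Field K] [IsAlgClosed K]
    (p : ℕ) [CharP K p] (hp : 2 < p) (n : ℤ)
    (h1 : ¬ (p : ℤ) ∣ (n ^ 2 - n) * (n ^ 2 - n + 1))
    (h2 : ¬ (p : ℤ) ∣ n ^ 2 - 4 * n + 7)
    (η : K)
    (hη : ((n : K) - 1) * η ^ 3 + ((n ^ 3 - 3 * n ^ 2 + 6 * n - 2 : ℤ) : K) * η ^ 2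
        + ((n ^ 3 - 3 * n ^ 2 + 3 * n + 1 : ℤ) : K) * η - ((n : K) - 1) = 0) :
    η ≠ 0 ∧ η ≠ -1 ∧
    (C ((n : K) - 1) * X ^ 3
        + C ((n ^ 3 - 3 * n ^ 2 + 6 * n - 2 : ℤ) : K) * X ^ 2
        + C ((n ^ 3 - 3 * n ^ 2 + 3 * n + 1 : ℤ) : K) * X
        - C ((n : K) - 1)
      = C ((n : K) - 1) * (X - C η) * (X + C (1 / (η + 1))) * (X + C ((η + 1) / η))) ∧
    η ≠ -(1 / (η + 1)) ∧ η ≠ -((η + 1) / η) ∧ -(1 / (η + 1)) ≠ -((η + 1) / η) :=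
  hurwitz_cubic_three_distinct_roots_general K p n h1 h2 η hη
end

section
/- Let K be a field of characteristic p > 0, let n ≥ 3 be an integer divisible by p, and write n = p^r·m with r ≥ 1 and p ∤ m; set q = p^r. If λ, t ∈ K are nonzero elements satisfying λ^{q+1} + λ + 1 = 0 and λ^{q+1}·t^{n²−n+1} = λ^n (equivalently, t^{n²−n+1} = λ^{n−q−1}), then λ·(t^n)^n + t^n·(t^{n−1})^n + λ^n·t^{n−1} = 0; that is, the projective point (λ : t^n : t^{n−1}) lies on the Hurwitz curve H_n. -/
/-! Writing `T = t^(n²-n+1)`, both `t^(n·n)` and `t^n·t^((n-1)·n)` equal `t^(n-1)·T`, so the Hurwitz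
form at `(λ : t^n : t^(n-1))` is `t^(n-1)·((λ + 1)·T + λ^n)`; substituting `λ^n = λ^(q+1)·T`
leaves `t^(n-1)·T·(λ^(q+1) + λ + 1) = 0`. -/

def hurwitzForm {R : Type*} [CommRing R] (n : ℕ) (X Y Z : R) : R :=
  X * Y ^ n + Y * Z ^ n + X ^ n * Z

section

variable {R : Type*} [CommRing R] {n : ℕ}

lemma hurwitzForm_pow_pow (hn : 1 ≤ n) (x t : R) :
    hurwitzForm n x (t ^ n) (t ^ (n - 1)) =
      t ^ (n - 1) * ((x + 1) * t ^ (n ^ 2 - n + 1) + x ^ n) := by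
  obtain ⟨k, rfl⟩ : ∃ k, n = k + 1 := ⟨n - 1, by omega⟩
  have hexp : (k + 1) ^ 2 - (k + 1) + 1 = k * k + k + 1 := by
    have : (k + 1) ^ 2 = k * k + 2 * k + 1 := by ring
    omega
  simp only [hurwitzForm, Nat.add_sub_cancel, hexp, ← pow_mul]
  have hYZ : t ^ (k + 1) * t ^ (k * (k + 1)) = t ^ k * t ^ (k * k + k + 1) := by
    rw [← pow_add, ← pow_add]; ring_nf
  have hYY : t ^ ((k + 1) * (k + 1)) = t ^ k * t ^ (k * k + k + 1) := by
    rw [← pow_add]; ring_nf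
  linear_combination x * hYY + hYZ

lemma hurwitzForm_pow_pow_eq_zero (hn : 1 ≤ n) {q : ℕ} {x t : R}
    (hx : x ^ (q + 1) + x + 1 = 0) (ht : x ^ (q + 1) * t ^ (n ^ 2 - n + 1) = x ^ n) :
    hurwitzForm n x (t ^ n) (t ^ (n - 1)) = 0 := by
  rw [hurwitzForm_pow_pow hn]
  linear_combination t ^ (n - 1) * t ^ (n ^ 2 - n + 1) * hx - t ^ (n - 1) * ht

end

theorem hurwitz_weierstrass_points_p_dvd_n_general (K : Type*) [Field K]
    (p : ℕ)
    (n r : ℕ) (hn : 3 ≤ n)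
    (lam t : K)
    (h1 : lam ^ (p ^ r + 1) + lam + 1 = 0)
    (h2 : lam ^ (p ^ r + 1) * t ^ (n ^ 2 - n + 1) = lam ^ n) :
    lam * (t ^ n) ^ n + t ^ n * (t ^ (n - 1)) ^ n + lam ^ n * t ^ (n - 1) = 0 :=
  hurwitzForm_pow_pow_eq_zero (by omega) h1 h2

/-- Let `K` have characteristic `p > 0`, `n = p^r·m ≥ 3` with `r ≥ 1`,
`p ∤ m`, and `q = p^r`. If `λ, t ∈ K` are nonzero with `λ^(q+1) + λ + 1 = 0` and
`λ^(q+1)·t^(n²-n+1) = λ^n`, then the projective point `(λ : t^n : t^(n-1))` lies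
on the Hurwitz curve `X·Y^n + Y·Z^n + X^n·Z = 0`. -/
theorem hurwitz_weierstrass_points_p_dvd_n (K : Type*) [Field K]
    (p : ℕ) (hp : p.Prime) [CharP K p]
    (n r m : ℕ) (hn : 3 ≤ n) (hr : 1 ≤ r) (hm : ¬ p ∣ m) (hnrm : n = p ^ r * m)
    (lam t : K) (hlam : lam ≠ 0) (ht : t ≠ 0)
    (h1 : lam ^ (p ^ r + 1) + lam + 1 = 0)
    (h2 : lam ^ (p ^ r + 1) * t ^ (n ^ 2 - n + 1) = lam ^ n) :
    lam * (t ^ n) ^ n + t ^ n * (t ^ (n - 1)) ^ n + lam ^ n * t ^ (n - 1) = 0 :=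
  hurwitz_weierstrass_points_p_dvd_n_general K p n r hn lam t h1 h2
end

section
/- Let K be an algebraically closed field of characteristic p > 0 and let n ≥ 3 be an integer with p ∤ n² − n + 1 and n ≢ 2 (mod 3). Suppose (a,b,c) ∈ K³ is a nonzero triple with a·b^n + b·c^n + a^n·c = 0, and suppose there exists λ ∈ K with (b, c, a) = (λa, λb, λc). Then: if p = 3, one has b = a and c = a (so the point is (1:1:1)); if p ≠ 3, there exist α ∈ K with α² + α + 1 = 0 and a nonzero scalar s ∈ K with (a, b, c) = (s·α, s·α², s) (so the point is (α : α² : 1) with α a primitive cubic root of unity). -/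
/-!
A fixed point of `μ` has `a ≠ 0` and `(b, c) = (λa, λ²a)` with `λ³ = 1`. On the curve this gives
`a^(n+1) (λ^n + λ^(2n+1) + λ²) = 0`, and for `n ≢ 2 (mod 3)` the bracket reduces to `λ² + λ + 1`.
In characteristic 3 that is `(λ - 1)²`, forcing `λ = 1`; otherwise `λ` is a primitive cube root of
unity and `(a, b, c) = λ²a · (λ, λ², 1)`.
-/

section CyclicFixedPoint

variable {K : Type*} [CommRing K] {a b c lam : K}

theorem ne_zero_of_cyclic_fixed (hb : b = lam * a) (hc : c = lam * b)
    (habc : ¬(a = 0 ∧ b = 0 ∧ c = 0)) : a ≠ 0 := by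
  rintro rfl
  exact habc ⟨rfl, by simp [hb], by simp [hc, hb]⟩

theorem pow_three_eq_one_of_cyclic_fixed [IsDomain K] (hb : b = lam * a) (hc : c = lam * b)
    (ha : a = lam * c) (ha0 : a ≠ 0) : lam ^ 3 = 1 := by
  have h : (lam ^ 3 - 1) * a = 0 := by linear_combination -ha - lam * hc - lam ^ 2 * hb
  exact sub_eq_zero.1 ((mul_eq_zero.1 h).resolve_right ha0)

theorem hurwitz_eval_cyclic (n : ℕ) (hb : b = lam * a) (hc : c = lam * b) :
    a * b ^ n + b * c ^ n + a ^ n * c =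
      a ^ (n + 1) * (lam ^ n + lam ^ (2 * n + 1) + lam ^ 2) := by
  subst hc hb
  ring

theorem pow_add_pow_add_sq_of_pow_three_eq_one (hl : lam ^ 3 = 1) {n : ℕ} (hn : n % 3 ≠ 2) :
    lam ^ n + lam ^ (2 * n + 1) + lam ^ 2 = lam ^ 2 + lam + 1 := by
  rw [pow_eq_pow_mod n hl, pow_eq_pow_mod (2 * n + 1) hl]
  rcases (by omega : n % 3 = 0 ∨ n % 3 = 1) with h | h
  · rw [h, show (2 * n + 1) % 3 = 1 by omega]
    ring
  · rw [h, show (2 * n + 1) % 3 = 0 by omega]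
    ring

theorem eq_one_of_sq_add_add_one_eq_zero [IsDomain K] [CharP K 3]
    (h : lam ^ 2 + lam + 1 = 0) : lam = 1 := by
  have h3 : ((3 : ℕ) : K) = 0 := CharP.cast_eq_zero K 3
  push_cast at h3
  have hsq : (lam - 1) ^ 2 = 0 := by linear_combination h - lam * h3
  exact sub_eq_zero.1 (pow_eq_zero_iff two_ne_zero |>.1 hsq)

end CyclicFixedPoint

theorem hurwitz_mu_fixed_points_general (K : Type*) [Field K]
    (p : ℕ) [CharP K p]
    (n : ℕ) (hn3 : n % 3 ≠ 2)
    (a b c : K) (habc : ¬(a = 0 ∧ b = 0 ∧ c = 0))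
    (hcurve : a * b ^ n + b * c ^ n + a ^ n * c = 0)
    (hfix : ∃ lam : K, b = lam * a ∧ c = lam * b ∧ a = lam * c) :
    (p = 3 → b = a ∧ c = a) ∧
    (p ≠ 3 → ∃ α s : K, α ^ 2 + α + 1 = 0 ∧ s ≠ 0 ∧
      a = s * α ∧ b = s * α ^ 2 ∧ c = s) := by
  obtain ⟨lam, hb, hc, ha⟩ := hfix
  have ha0 : a ≠ 0 := ne_zero_of_cyclic_fixed hb hc habc
  have hcube : lam ^ 3 = 1 := pow_three_eq_one_of_cyclic_fixed hb hc ha ha0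
  have hroot : lam ^ 2 + lam + 1 = 0 := by
    rw [hurwitz_eval_cyclic n hb hc, pow_add_pow_add_sq_of_pow_three_eq_one hcube hn3] at hcurve
    exact (mul_eq_zero.1 hcurve).resolve_left (pow_ne_zero _ ha0)
  refine ⟨fun hp3 => ?_, fun _ => ?_⟩
  · subst hp3
    obtain rfl : lam = 1 := eq_one_of_sq_add_add_one_eq_zero hroot
    exact ⟨by rw [hb, one_mul], by rw [hc, hb, one_mul, one_mul]⟩
  · have hl0 : lam ≠ 0 := by rintro rfl; simp at hcube
    refine ⟨lam, lam ^ 2 * a, hroot, mul_ne_zero (pow_ne_zero _ hl0) ha0, ?_, ?_, ?_⟩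
    · linear_combination (-a) * hcube
    · linear_combination hb - lam * a * hcube
    · linear_combination hc + lam * hb

/-- Over an algebraically closed field of characteristic `p > 0`, with
`p ∤ n²-n+1` and `n ≢ 2 (mod 3)`, any point `(a:b:c)` of the Hurwitz curve fixed by
`μ : (X:Y:Z) ↦ (Y:Z:X)` is `(1:1:1)` if `p = 3`, and of the form `(α:α²:1)` with
`α` a primitive cubic root of unity if `p ≠ 3`. -/
theorem hurwitz_mu_fixed_points (K : Type*) [Field K] [IsAlgClosed K]
    (p : ℕ) [CharP K p] (hp : 0 < p)
    (n : ℕ) (hn : 3 ≤ n) (hpn : ¬ p ∣ (n ^ 2 - n + 1)) (hn3 : n % 3 ≠ 2)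
    (a b c : K) (habc : ¬(a = 0 ∧ b = 0 ∧ c = 0))
    (hcurve : a * b ^ n + b * c ^ n + a ^ n * c = 0)
    (hfix : ∃ lam : K, b = lam * a ∧ c = lam * b ∧ a = lam * c) :
    (p = 3 → b = a ∧ c = a) ∧
    (p ≠ 3 → ∃ α s : K, α ^ 2 + α + 1 = 0 ∧ s ≠ 0 ∧
      a = s * α ∧ b = s * α ^ 2 ∧ c = s) :=
  hurwitz_mu_fixed_points_general K p n hn3 a b c habc hcurve hfix
end

section
/- Let K be a field of characteristic p > 0, let n ≥ 3 be an integer with n ≡ 2 (mod 3) and p ∤ n² − n + 1, and let α ∈ K satisfy α² + α + 1 = 0. For a nonzero triple (a,b,c) ∈ K³ with a·b^n + b·c^n + a^n·c = 0, there exists λ ∈ K with (α²·b, α·c, a) = (λa, λb, λc) if and only if (a,b,c) is a nonzero scalar multiple of (α, 1, 1), of (1, α, 1), or of (1, 1, α). -/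
/-!
The map `(a, b, c) ↦ (α²b, αc, a)` is linear with cube equal to the identity (as `α³ = 1`),
so the eigenvalue `λ` of a nonzero fixed triple satisfies `λ³ = 1`, i.e. `λ ∈ {1, α, α²}`.
Each of these eigenvalues has the one-dimensional eigenspace spanned by `(1, α, 1)`,
`(α, 1, 1)` and `(1, 1, α)` respectively.
-/

section CubeRootOfUnity

variable {K : Type*} [Field K] {α : K}

theorem pow_three_eq_one_of_sq_add_self_add_one (hα : α ^ 2 + α + 1 = 0) : α ^ 3 = 1 := by
  linear_combination (α - 1) * hα

theorem eq_one_or_eq_or_eq_sq_of_pow_three_eq_one (hα : α ^ 2 + α + 1 = 0) {x : K}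
    (hx : x ^ 3 = 1) : x = 1 ∨ x = α ∨ x = α ^ 2 := by
  have h : (x - 1) * ((x - α) * (x - α ^ 2)) = 0 := by
    linear_combination hx + (α - 1 - x) * (x - 1) * hα
  simpa only [mul_eq_zero, sub_eq_zero] using h

end CubeRootOfUnity

section FixedPoints

variable {K : Type*} [Field K] {α lam a b c : K}

theorem third_ne_zero_of_fixed (hα : α ≠ 0) (habc : ¬(a = 0 ∧ b = 0 ∧ c = 0))
    (h₁ : α ^ 2 * b = lam * a) (h₃ : a = lam * c) : c ≠ 0 := by
  rintro rfl
  have ha : a = 0 := by rw [h₃, mul_zero]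
  have hb : b = 0 := by simpa [ha, hα] using h₁
  exact habc ⟨ha, hb, rfl⟩

theorem pow_three_eq_one_of_fixed (hα : α ^ 3 = 1) (hc : c ≠ 0)
    (h₁ : α ^ 2 * b = lam * a) (h₂ : α * c = lam * b) (h₃ : a = lam * c) : lam ^ 3 = 1 := by
  have h : (lam ^ 3 - 1) * c = 0 := by
    linear_combination -lam ^ 2 * h₃ - lam * h₁ - α ^ 2 * h₂ + c * hα
  exact sub_eq_zero.mp ((mul_eq_zero.mp h).resolve_right hc)

end FixedPoints

theorem hurwitz_tau_mu_fixed_points_general (K : Type*) [Field K]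
    (α : K) (hα : α ^ 2 + α + 1 = 0)
    (a b c : K) (habc : ¬(a = 0 ∧ b = 0 ∧ c = 0)) :
    (∃ lam : K, α ^ 2 * b = lam * a ∧ α * c = lam * b ∧ a = lam * c) ↔
    (∃ s : K, s ≠ 0 ∧ ((a = s * α ∧ b = s ∧ c = s) ∨
      (a = s ∧ b = s * α ∧ c = s) ∨ (a = s ∧ b = s ∧ c = s * α))) := by
  have hα3 := pow_three_eq_one_of_sq_add_self_add_one hα
  have hα0 : α ≠ 0 := (IsUnit.of_pow_eq_one hα3 three_ne_zero).ne_zero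
  constructor
  · rintro ⟨lam, h₁, h₂, h₃⟩
    have hc := third_ne_zero_of_fixed hα0 habc h₁ h₃
    rcases eq_one_or_eq_or_eq_sq_of_pow_three_eq_one hα
      (pow_three_eq_one_of_fixed hα3 hc h₁ h₂ h₃) with rfl | rfl | rfl
    · exact ⟨c, hc, Or.inr (Or.inl ⟨by simpa using h₃, by linear_combination -h₂, rfl⟩)⟩
    · have hbc : b = c := mul_left_cancel₀ hα0 (by linear_combination -h₂)
      exact ⟨c, hc, Or.inl ⟨by linear_combination h₃, hbc, rfl⟩⟩
    · have hcb : c = b * α := mul_left_cancel₀ hα0 (by linear_combination h₂)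
      have hab : a = b := by linear_combination h₃ + α ^ 2 * hcb + b * hα3
      exact ⟨b, fun hb ↦ hc (by simp [hcb, hb]), Or.inr (Or.inr ⟨hab, rfl, hcb⟩)⟩
  · rintro ⟨s, -, ⟨ha, hb, hc⟩ | ⟨ha, hb, hc⟩ | ⟨ha, hb, hc⟩⟩ <;> subst a b c
    · exact ⟨α, by ring, by ring, by ring⟩
    · exact ⟨1, by linear_combination s * hα3, by ring, by ring⟩
    · exact ⟨α ^ 2, by ring, by ring, by linear_combination -s * hα3⟩

/-- If `n ≡ 2 (mod 3)`, `p ∤ n²-n+1` and `α² + α + 1 = 0`, then a point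
`(a:b:c)` of the Hurwitz curve is fixed by `τμ` (i.e. `(α²b, αc, a) = λ·(a,b,c)` for
some `λ`) if and only if `(a,b,c)` is a nonzero scalar multiple of `(α,1,1)`,
`(1,α,1)` or `(1,1,α)`. -/
theorem hurwitz_tau_mu_fixed_points (K : Type*) [Field K]
    (p : ℕ) [CharP K p] (hp : 0 < p)
    (n : ℕ) (hn : 3 ≤ n) (hn3 : n % 3 = 2) (hpn : ¬ p ∣ (n ^ 2 - n + 1))
    (α : K) (hα : α ^ 2 + α + 1 = 0)
    (a b c : K) (habc : ¬(a = 0 ∧ b = 0 ∧ c = 0))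
    (hcurve : a * b ^ n + b * c ^ n + a ^ n * c = 0) :
    (∃ lam : K, α ^ 2 * b = lam * a ∧ α * c = lam * b ∧ a = lam * c) ↔
    (∃ s : K, s ≠ 0 ∧ ((a = s * α ∧ b = s ∧ c = s) ∨
      (a = s ∧ b = s * α ∧ c = s) ∨ (a = s ∧ b = s ∧ c = s * α))) :=
  hurwitz_tau_mu_fixed_points_general K α hα a b c habc
end

section
/- Let p be an odd prime, let K be an algebraically closed field of characteristic p, and let n ≥ 1 be an integer with p ∤ n. Then the image in K[x] of the Lucas-type polynomial L_n is a monic polynomial of degree n which is separable (it has n distinct roots in K). -/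
/-!
`L_n` is the Dickson polynomial `D_n(x, 1)`, so `L_n(ζ + ζ⁻¹) = ζⁿ + ζ⁻ⁿ`, which vanishes whenever
`ζ^(2n) = -1`. If the characteristic does not divide `2n`, there are `2n` such `ζ` in an
algebraically closed field, and `ζ ↦ ζ + ζ⁻¹` is at most two-to-one on nonzero elements, so `L_n`
has at least `n = deg L_n` distinct roots and is therefore separable.
-/

/-- The Lucas-type polynomials: `L₀ = 2`, `L₁ = x`, `Lₖ = x·Lₖ₋₁ - Lₖ₋₂`. -/
noncomputable def lucasPoly : ℕ → Polynomial ℤ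
  | 0 => 2
  | 1 => Polynomial.X
  | (k + 2) => Polynomial.X * lucasPoly (k + 1) - lucasPoly k

open Polynomial Finset

theorem eq_or_eq_inv_of_add_inv_eq {K : Type*} [Field K] {c d : K} (hc : c ≠ 0) (hd : d ≠ 0)
    (h : c + c⁻¹ = d + d⁻¹) : d = c ∨ d = c⁻¹ := by
  have hfactor : (c - d) * (c * d - 1) = 0 := by
    field_simp at h
    linear_combination h
  rcases mul_eq_zero.mp hfactor with hcd | hcd
  · exact Or.inl (sub_eq_zero.mp hcd).symm
  · exact Or.inr (eq_inv_of_mul_eq_one_right (sub_eq_zero.mp hcd))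

theorem card_le_two_mul_card_image_add_inv {K : Type*} [Field K] [DecidableEq K] {s : Finset K}
    (hs : 0 ∉ s) : #s ≤ 2 * #(s.image fun x ↦ x + x⁻¹) := by
  refine card_le_mul_card_image s 2 fun b _ ↦ ?_
  rcases Finset.eq_empty_or_nonempty {x ∈ s | x + x⁻¹ = b} with he | ⟨c, hc⟩
  · simp [he]
  obtain ⟨hcs, rfl⟩ := mem_filter.mp hc
  have hsub : {x ∈ s | x + x⁻¹ = c + c⁻¹} ⊆ {c, c⁻¹} := fun d hd ↦ by
    obtain ⟨hds, hdc⟩ := mem_filter.mp hd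
    simpa using eq_or_eq_inv_of_add_inv_eq (ne_of_mem_of_not_mem hcs hs)
      (ne_of_mem_of_not_mem hds hs) hdc.symm
  exact (card_le_card hsub).trans card_le_two

namespace Polynomial

section Dickson

variable {R : Type*} [CommRing R] (k : ℕ) (a : R)

theorem natDegree_dickson_le : ∀ n, (dickson k a n).natDegree ≤ n
  | 0 => by simpa [dickson_zero] using natDegree_sub_le (3 : R[X]) k
  | 1 => by simpa using natDegree_X_le
  | n + 2 => by
    rw [dickson_add_two]
    refine (natDegree_sub_le _ _).trans (max_le ?_ ?_)
    · exact natDegree_mul_le.trans (add_le_add natDegree_X_le (natDegree_dickson_le (n + 1)))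
        |>.trans (by omega)
    · exact (natDegree_C_mul_le _ _).trans ((natDegree_dickson_le n).trans (by omega))

theorem coeff_dickson_self : ∀ {n}, n ≠ 0 → (dickson k a n).coeff n = 1
  | 1, _ => by simp
  | n + 2, _ => by
    rw [dickson_add_two, coeff_sub, coeff_X_mul, coeff_C_mul,
      coeff_eq_zero_of_natDegree_lt ((natDegree_dickson_le k a n).trans_lt (by omega)),
      coeff_dickson_self (by omega)]
    ring

variable {n : ℕ}

theorem dickson_monic (hn : n ≠ 0) : (dickson k a n).Monic :=
  monic_of_natDegree_le_of_coeff_eq_one n (natDegree_dickson_le k a n) (coeff_dickson_self k a hn)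

theorem natDegree_dickson [Nontrivial R] (hn : n ≠ 0) : (dickson k a n).natDegree = n :=
  natDegree_eq_of_le_of_coeff_ne_zero (natDegree_dickson_le k a n)
    (by rw [coeff_dickson_self k a hn]; exact one_ne_zero)

end Dickson

variable {K : Type*} [Field K] {n : ℕ}

theorem separable_of_forall_isRoot_of_natDegree_le_card {f : K[X]} (hf : f ≠ 0) {s : Finset K}
    (hs : ∀ x ∈ s, f.IsRoot x) (hcard : f.natDegree ≤ #s) : f.Separable := by
  classical
  have hsub : #s ≤ #f.roots.toFinset := card_le_card fun x hx ↦
    Multiset.mem_toFinset.mpr ((mem_roots hf).mpr (hs x hx))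
  have hdedup := Multiset.toFinset_card_le f.roots
  have hdeg := card_roots' f
  refine (nodup_roots_iff_of_splits hf (splits_iff_card_roots.mpr (by omega))).mp ?_
  exact Multiset.toFinset_card_eq_card_iff_nodup.mp (by omega)

theorem card_nthRootsFinset_of_isAlgClosed [IsAlgClosed K] {a : K} (hn : (n : K) ≠ 0)
    (ha : a ≠ 0) : #(nthRootsFinset n a) = n := by
  classical
  rw [nthRootsFinset_def, nthRoots, Multiset.toFinset_card_of_nodup
    (nodup_roots (separable_X_pow_sub_C a hn ha)), IsAlgClosed.card_roots_eq_natDegree,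
    natDegree_X_pow_sub_C]

theorem dickson_one_one_separable_of_isAlgClosed [IsAlgClosed K] (h2n : (2 * n : K) ≠ 0) :
    (dickson 1 (1 : K) n).Separable := by
  classical
  have hn : n ≠ 0 := by rintro rfl; simp at h2n
  have h2n' : ((2 * n : ℕ) : K) ≠ 0 := by exact_mod_cast h2n
  set S := nthRootsFinset (2 * n) (-1 : K)
  have hS : ∀ ζ ∈ S, ζ ^ (2 * n) = -1 := fun ζ hζ ↦ (mem_nthRootsFinset (by omega) _).mp hζ
  have hS0 : (0 : K) ∉ S := fun h ↦ by simpa [zero_pow (by omega : 2 * n ≠ 0)] using hS 0 h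
  have hroots : ∀ x ∈ S.image fun ζ ↦ ζ + ζ⁻¹, (dickson 1 (1 : K) n).IsRoot x := by
    rw [forall_mem_image]
    intro ζ hζ
    have hζ0 : ζ ≠ 0 := ne_of_mem_of_not_mem hζ hS0
    rw [IsRoot, dickson_one_one_eval_add_inv ζ ζ⁻¹ (mul_inv_cancel₀ hζ0) n, inv_pow]
    have hsq : ζ ^ n * ζ ^ n = -1 := by rw [← pow_add, ← two_mul, hS ζ hζ]
    field_simp
    linear_combination hsq
  refine separable_of_forall_isRoot_of_natDegree_le_card (dickson_monic 1 1 hn).ne_zero hroots ?_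
  have hcard := card_le_two_mul_card_image_add_inv hS0
  rw [card_nthRootsFinset_of_isAlgClosed h2n' (neg_ne_zero.mpr one_ne_zero)] at hcard
  rw [natDegree_dickson 1 1 hn]
  omega

theorem dickson_one_one_separable (h2n : (2 * n : K) ≠ 0) : (dickson 1 (1 : K) n).Separable := by
  rw [← separable_map (algebraMap K (AlgebraicClosure K)), map_dickson, map_one]
  refine dickson_one_one_separable_of_isAlgClosed ?_
  have := (_root_.map_ne_zero (algebraMap K (AlgebraicClosure K))).mpr h2n
  rwa [map_mul, map_ofNat, map_natCast] at this

end Polynomial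

theorem lucasPoly_eq_dickson : ∀ n, lucasPoly n = dickson 1 1 n
  | 0 => by norm_num [lucasPoly, dickson_zero]
  | 1 => by simp [lucasPoly]
  | n + 2 => by
    rw [lucasPoly, lucasPoly_eq_dickson n, lucasPoly_eq_dickson (n + 1), dickson_add_two]
    simp

theorem map_lucasPoly {R : Type*} [CommRing R] (n : ℕ) :
    (lucasPoly n).map (Int.castRingHom R) = dickson 1 1 n := by
  rw [lucasPoly_eq_dickson, map_dickson, map_one]

/-- Over an algebraically closed field `K` of odd characteristic `p`
with `p ∤ n`, the image in `K[x]` of the Lucas-type polynomial `L_n` is monic of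
degree `n` and separable, having `n` distinct roots in `K`. -/
theorem lucasPoly_separable (p : ℕ) (hp : p.Prime) (hodd : Odd p)
    (K : Type*) [Field K] [IsAlgClosed K] [CharP K p]
    (n : ℕ) (hn : 1 ≤ n) (hpn : ¬ p ∣ n) :
    ((lucasPoly n).map (Int.castRingHom K)).Monic ∧
    ((lucasPoly n).map (Int.castRingHom K)).natDegree = n ∧
    ((lucasPoly n).map (Int.castRingHom K)).Separable ∧
    ((lucasPoly n).map (Int.castRingHom K)).roots.card = n ∧ ((lucasPoly n).map (Int.castRingHom K)).roots.Nodup := by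
  have hp2 : ¬ p ∣ 2 := fun h ↦ by
    rw [(Nat.prime_dvd_prime_iff_eq hp Nat.prime_two).mp h] at hodd
    exact absurd hodd (by decide)
  have h2n : (2 * n : K) ≠ 0 := by
    exact_mod_cast (CharP.cast_eq_zero_iff K p (2 * n)).not.mpr
      fun h ↦ (hp.dvd_mul.mp h).elim hp2 hpn
  have hn0 : n ≠ 0 := by omega
  have hsep := dickson_one_one_separable h2n
  rw [map_lucasPoly]
  exact ⟨dickson_monic 1 1 hn0, natDegree_dickson 1 1 hn0, hsep,
    IsAlgClosed.card_roots_eq_natDegree.trans (natDegree_dickson 1 1 hn0), nodup_roots hsep⟩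
end

section
/- Let K be a field, n ≥ 1 an integer, and let x, y ∈ K with x ≠ 0 satisfy y^n = x^{2n} + 1. Then (y/x)^n = L_n(x + 1/x), where L_n is the n-th Lucas-type polynomial evaluated at x + x⁻¹. In other words, the map (x, y) ↦ (x + 1/x, y/x) sends points of the generalized Fermat curve G_n : y^n = x^{2n} + 1 (with x ≠ 0) to points of the curve C_n : y^n = L_n(x), so C_n is covered by G_n. -/
/-! Since `L_n(a + a⁻¹) = aⁿ + a⁻ⁿ`, taking `a = x` turns `(y/x)ⁿ = (x²ⁿ + 1)/xⁿ` into
`L_n(x + 1/x)`. -/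

open Polynomial

theorem aeval_add_lucasPoly_of_mul_eq_one {R : Type*} [CommRing R] {a b : R} (hab : a * b = 1) :
    ∀ n, aeval (a + b) (lucasPoly n) = a ^ n + b ^ n
  | 0 => by norm_num [lucasPoly, map_ofNat]
  | 1 => by simp [lucasPoly]
  | n + 2 => by
    rw [lucasPoly, map_sub, map_mul, aeval_X, aeval_add_lucasPoly_of_mul_eq_one hab (n + 1),
      aeval_add_lucasPoly_of_mul_eq_one hab n]
    linear_combination (a ^ n + b ^ n) * hab

theorem lucas_curve_covered_by_fermat_general (K : Type*) [Field K] (n : ℕ)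
    (x y : K) (hx : x ≠ 0) (hy : y ^ n = x ^ (2 * n) + 1) :
    (y / x) ^ n = Polynomial.aeval (x + 1 / x) (lucasPoly n) := by
  rw [aeval_add_lucasPoly_of_mul_eq_one (mul_one_div_cancel hx), div_pow, hy, one_div_pow]
  field_simp
  ring

/-- If `x ≠ 0` and `y^n = x^(2n) + 1` in a field `K`, then
`(y/x)^n = L_n(x + 1/x)`; i.e. the map `(x,y) ↦ (x + 1/x, y/x)` sends points of the
generalized Fermat curve `y^n = x^(2n) + 1` (with `x ≠ 0`) to points of the curve
`C_n : y^n = L_n(x)`, so `C_n` is covered by `G_n`. -/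
theorem lucas_curve_covered_by_fermat (K : Type*) [Field K] (n : ℕ) (hn : 1 ≤ n)
    (x y : K) (hx : x ≠ 0) (hy : y ^ n = x ^ (2 * n) + 1) :
    (y / x) ^ n = Polynomial.aeval (x + 1 / x) (lucasPoly n) :=
  lucas_curve_covered_by_fermat_general K n x y hx hy
end
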